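/- Let α_v : [0,∞) → [0,∞) be continuous, strictly increasing, unbounded with α_v(0)=0, and let d ≥ 0. Define γ̃(r) := 2·max(α_v⁻¹(r), r), λ₁(s) := s − α_v(s) + α_v(s/2), and λ(s) := (1/2)·(s + max_{s'∈[0,s]} λ₁(s')). Let v : ℕ → [0,∞) satisfy v(i+1) ≤ v(i) − α_v(v(i)) + d for all i ∈ ℕ. Then: (i) for every i, if v(i) ≤ γ̃(d) then v(i+1) ≤ γ̃(d); (ii) for every i, if v(i) > γ̃(d) then v(i+1) ≤ λ(v(i)); and (iii) for all l ≤ t in ℕ, v(t) ≤ max( λ^{(t−l)}(v(l)), γ̃(d) ), where λ^{(k)} denotes the k-fold composition of λ. -/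

import Mathlib

open Filter

noncomputable section

/-- Class 𝒦: continuous, strictly increasing on `[0,∞)`, vanishing at `0`, nonnegative. -/
def IsClassK (h : ℝ → ℝ) : Prop :=
  ContinuousOn h (Set.Ici 0) ∧ StrictMonoOn h (Set.Ici 0) ∧ h 0 = 0 ∧ ∀ r, 0 ≤ r → 0 ≤ h r

/-- Class 𝒦∞: class 𝒦 and unbounded. -/
def IsKInfty (h : ℝ → ℝ) : Prop :=
  IsClassK h ∧ Tendsto h atTop atTop

/-- Generalised inverse of a class-𝒦∞ function. -/
noncomputable def kinv (h : ℝ → ℝ) (r : ℝ) : ℝ := sInf {s : ℝ | 0 ≤ s ∧ r ≤ h s}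

/-- `γ̃(r) = 2·max(α_v⁻¹(r), r)`. -/
noncomputable def gamTilde (αv : ℝ → ℝ) (r : ℝ) : ℝ := 2 * max (kinv αv r) r

/-- `λ₁(s) = s − α_v(s) + α_v(s/2)`. -/
noncomputable def lam1 (αv : ℝ → ℝ) (s : ℝ) : ℝ := s - αv s + αv (s / 2)

/-- `λ(s) = (1/2)(s + max_{s' ∈ [0,s]} λ₁(s'))`. -/
noncomputable def lam (αv : ℝ → ℝ) (s : ℝ) : ℝ :=
  (1 / 2) * (s + sSup (lam1 αv '' Set.Icc 0 s))
section Aux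

variable {αv : ℝ → ℝ}

lemma kset_nonempty (hαv : IsKInfty αv) (d : ℝ) :
    {s : ℝ | 0 ≤ s ∧ d ≤ αv s}.Nonempty := by
  obtain ⟨N, hN⟩ := (hαv.2.eventually (eventually_ge_atTop d)).exists_forall_of_atTop
  exact ⟨max N 0, le_max_right _ _, hN _ (le_max_left _ _)⟩

lemma kinv_nonneg (hαv : IsKInfty αv) (d : ℝ) : 0 ≤ kinv αv d :=
  le_csInf (kset_nonempty hαv d) fun s hs => hs.1

lemma le_alpha_of_kinv_lt (hαv : IsKInfty αv) {d x : ℝ} (hx : 0 ≤ x)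
    (h : kinv αv d < x) : d ≤ αv x := by
  obtain ⟨s, hs, hsx⟩ := exists_lt_of_csInf_lt (kset_nonempty hαv d) h
  exact hs.2.trans ((hαv.1.2.1.monotoneOn) hs.1 hx hsx.le)

lemma le_kinv_of_alpha_lt (hαv : IsKInfty αv) {d x : ℝ} (hx : 0 ≤ x)
    (h : αv x < d) : x ≤ kinv αv d := by
  refine le_csInf (kset_nonempty hαv d) fun s hs => ?_
  by_contra hc
  push_neg at hc
  exact absurd (hs.2.trans ((hαv.1.2.1.monotoneOn) hs.1 hx hc.le)) (not_le.2 h)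

lemma lam1_contOn (hαv : IsKInfty αv) (b : ℝ) :
    ContinuousOn (lam1 αv) (Set.Icc 0 b) := by
  have h1 : ContinuousOn (fun s => αv s) (Set.Icc 0 b) :=
    hαv.1.1.mono (fun s hs => hs.1)
  have h2 : ContinuousOn (fun s => αv (s / 2)) (Set.Icc 0 b) := by
    refine hαv.1.1.comp (continuousOn_id.div_const 2) fun s hs => by
      simpa using div_nonneg hs.1 (by norm_num)
  exact (continuousOn_id.sub h1).add h2

lemma lam1_bddAbove (hαv : IsKInfty αv) (b : ℝ) :
    BddAbove (lam1 αv '' Set.Icc 0 b) :=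
  (isCompact_Icc.image_of_continuousOn (lam1_contOn hαv b)).bddAbove

lemma lam1_le_self (hαv : IsKInfty αv) {s : ℝ} (hs : 0 ≤ s) : lam1 αv s ≤ s := by
  have : αv (s / 2) ≤ αv s :=
    (hαv.1.2.1.monotoneOn) (by simpa using div_nonneg hs (by norm_num)) hs (by linarith)
  unfold lam1; linarith

lemma sSup_lam1_le (hαv : IsKInfty αv) {s : ℝ} (hs : 0 ≤ s) :
    sSup (lam1 αv '' Set.Icc 0 s) ≤ s := by
  refine csSup_le (((Set.nonempty_Icc).2 hs).image _) ?_
  rintro _ ⟨x, hx, rfl⟩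
  exact (lam1_le_self hαv hx.1).trans hx.2

lemma lam_le_self (hαv : IsKInfty αv) {s : ℝ} (hs : 0 ≤ s) : lam αv s ≤ s := by
  have := sSup_lam1_le hαv hs
  unfold lam; linarith

lemma lam1_le_lam (hαv : IsKInfty αv) {s : ℝ} (hs : 0 ≤ s) : lam1 αv s ≤ lam αv s := by
  have h1 : lam1 αv s ≤ sSup (lam1 αv '' Set.Icc 0 s) :=
    le_csSup (lam1_bddAbove hαv s) ⟨s, ⟨hs, le_refl s⟩, rfl⟩
  have h2 := lam1_le_self hαv hs
  unfold lam; linarith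

lemma lam_mono (hαv : IsKInfty αv) {a b : ℝ} (ha : 0 ≤ a) (hab : a ≤ b) :
    lam αv a ≤ lam αv b := by
  have h : sSup (lam1 αv '' Set.Icc 0 a) ≤ sSup (lam1 αv '' Set.Icc 0 b) :=
    csSup_le_csSup (lam1_bddAbove hαv b) (((Set.nonempty_Icc).2 ha).image _)
      (Set.image_mono (Set.Icc_subset_Icc_right hab))
  unfold lam; linarith

end Aux

theorem lyapunov_recursion_bound (αv : ℝ → ℝ) (hαv : IsKInfty αv)
    (d : ℝ) (hd : 0 ≤ d) (v : ℕ → ℝ) (hv : ∀ i, 0 ≤ v i)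
    (hrec : ∀ i : ℕ, v (i + 1) ≤ v i - αv (v i) + d) :
    (∀ i : ℕ, v i ≤ gamTilde αv d → v (i + 1) ≤ gamTilde αv d) ∧
    (∀ i : ℕ, gamTilde αv d < v i → v (i + 1) ≤ lam αv (v i)) ∧
    (∀ l t : ℕ, l ≤ t → v t ≤ max ((lam αv)^[t - l] (v l)) (gamTilde αv d)) := by
  have hnn : ∀ r, 0 ≤ r → 0 ≤ αv r := hαv.1.2.2.2
  have key1 : ∀ i : ℕ, v i ≤ gamTilde αv d → v (i + 1) ≤ gamTilde αv d := by
    intro i h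
    rcases le_or_gt d (αv (v i)) with hc | hc
    · have := hrec i; linarith
    · have h1 : v i ≤ kinv αv d := le_kinv_of_alpha_lt hαv (hv i) hc
      have h2 : kinv αv d ≤ max (kinv αv d) d := le_max_left _ _
      have h3 : d ≤ max (kinv αv d) d := le_max_right _ _
      have h4 := hnn _ (hv i)
      have := hrec i
      unfold gamTilde
      linarith
  have key2 : ∀ i : ℕ, gamTilde αv d < v i → v (i + 1) ≤ lam αv (v i) := by
    intro i h
    have hkm : 2 * kinv αv d ≤ gamTilde αv d := by
      unfold gamTilde; have := le_max_left (kinv αv d) d; linarith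
    have hk : kinv αv d < v i / 2 := by linarith
    have hd2 : d ≤ αv (v i / 2) :=
      le_alpha_of_kinv_lt hαv (by have := hv i; linarith) hk
    have h1 : v (i + 1) ≤ lam1 αv (v i) := by
      have := hrec i; unfold lam1; linarith
    exact h1.trans (lam1_le_lam hαv (hv i))
  refine ⟨key1, key2, ?_⟩
  have step : ∀ i : ℕ, v (i + 1) ≤ max (lam αv (v i)) (gamTilde αv d) := by
    intro i
    rcases le_or_gt (v i) (gamTilde αv d) with h | h
    · exact (key1 i h).trans (le_max_right _ _)
    · exact (key2 i h).trans (le_max_left _ _)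
  intro l t hlt
  obtain ⟨k, rfl⟩ := Nat.exists_eq_add_of_le hlt
  rw [Nat.add_sub_cancel_left]
  induction k with
  | zero => simpa using le_max_left _ _
  | succ n ih =>
    have h1 : v (l + n + 1) ≤ max (lam αv (v (l + n))) (gamTilde αv d) := step (l + n)
    rcases le_or_gt (v (l + n)) (gamTilde αv d) with h | h
    · have := key1 (l + n) h
      have : v (l + (n + 1)) ≤ gamTilde αv d := by
        rw [show l + (n + 1) = l + n + 1 by ring]; exact this
      exact this.trans (le_max_right _ _)
    · have h2 : v (l + n) ≤ (lam αv)^[n] (v l) := by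
        rcases le_max_iff.1 (ih (Nat.le_add_right _ _)) with h' | h'
        · exact h'
        · exact absurd h' (not_le.2 h)
      have h3 : lam αv (v (l + n)) ≤ (lam αv)^[n + 1] (v l) := by
        rw [Function.iterate_succ_apply']
        exact lam_mono hαv (hv _) h2
      have : v (l + (n + 1)) ≤ lam αv (v (l + n)) := by
        rw [show l + (n + 1) = l + n + 1 by ring]; exact key2 (l + n) h
      exact this.trans (h3.trans (le_max_left _ _))

end
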